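/- Let F̂(η) = (1/t) log f(w_{t,η}) be the log-transformed meta objective. Then for every η ≥ 0, |F̂'(η)| ≤ 4L³ / (c_min² α (L − α)). In particular the meta-gradient of the log-transformed objective is bounded polynomially in the problem parameters, uniformly in the unroll length t. -/

import Mathlib

/-!
Let `M = max_i |1 - η λ_i|`; since `η ≥ 0` it is attained at `λ_1 = L` or `λ_d = α`. Differentiating
`f(η) = ½ ∑ c_i² λ_i (1 - η λ_i)^{2t}` gives `|f'| ≤ t L² M^{2t-1}`, while the single term at the index
attaining `M` gives `f ≥ ½ c_min² α M^{2t}`. Hence `|F̂'| = |f'| / (t f) ≤ 2 L² / (c_min² α M)`, with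
no dependence on `t`. Finally `M` cannot be small: `L - α = α (η L - 1) + L (1 - η α) ≤ 2 L M`.
-/

open Finset Real

section UnrolledLoss

variable {ι : Type*} [Fintype ι] (c lam : ι → ℝ) (t : ℕ)

/-- `f(w_{t,η})` in the eigenbasis of `H`, with `c i = ⟨w₀, u_i⟩` and `lam i = λ_i`. -/
noncomputable def unrolledLoss (η : ℝ) : ℝ :=
  (1 / 2) * ∑ i, c i ^ 2 * lam i * (1 - η * lam i) ^ (2 * t)

noncomputable def unrolledLossDeriv (η : ℝ) : ℝ :=
  -(t : ℝ) * ∑ i, c i ^ 2 * lam i ^ 2 * (1 - η * lam i) ^ (2 * t - 1)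

theorem hasDerivAt_unrolledLoss (η : ℝ) :
    HasDerivAt (unrolledLoss c lam t) (unrolledLossDeriv c lam t η) η := by
  have hterm : ∀ i ∈ univ, HasDerivAt (fun x => c i ^ 2 * lam i * (1 - x * lam i) ^ (2 * t))
      (c i ^ 2 * lam i * ((2 * t : ℕ) * (1 - η * lam i) ^ (2 * t - 1) * -lam i)) η := by
    intro i _
    have hlin : HasDerivAt (fun x : ℝ => 1 - x * lam i) (-lam i) η := by
      simpa using ((hasDerivAt_id η).mul_const (lam i)).const_sub 1
    exact (hlin.pow (2 * t)).const_mul _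
  refine ((HasDerivAt.fun_sum hterm).const_mul (1 / 2 : ℝ)).congr_deriv ?_
  rw [unrolledLossDeriv, mul_sum, mul_sum]
  refine sum_congr rfl fun i _ => ?_
  push_cast
  ring

variable {c lam t}

theorem abs_unrolledLossDeriv_le {η L M : ℝ} (hc : ∑ i, c i ^ 2 = 1)
    (hlam : ∀ i, |lam i| ≤ L) (hM : ∀ i, |1 - η * lam i| ≤ M) :
    |unrolledLossDeriv c lam t η| ≤ t * L ^ 2 * M ^ (2 * t - 1) := by
  have hterm : ∀ i ∈ univ, |c i ^ 2 * lam i ^ 2 * (1 - η * lam i) ^ (2 * t - 1)|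
      ≤ c i ^ 2 * (L ^ 2 * M ^ (2 * t - 1)) := by
    intro i _
    rw [abs_mul, abs_mul, abs_pow, abs_pow, abs_pow, sq_abs (c i), mul_assoc]
    gcongr
    · exact hlam i
    · exact hM i
  calc |unrolledLossDeriv c lam t η|
      = t * |∑ i, c i ^ 2 * lam i ^ 2 * (1 - η * lam i) ^ (2 * t - 1)| := by
        rw [unrolledLossDeriv, abs_mul, abs_neg, Nat.abs_cast]
    _ ≤ t * ∑ i, c i ^ 2 * (L ^ 2 * M ^ (2 * t - 1)) := by
        gcongr
        exact (abs_sum_le_sum_abs _ _).trans (sum_le_sum hterm)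
    _ = t * L ^ 2 * M ^ (2 * t - 1) := by rw [← sum_mul, hc]; ring

theorem term_le_unrolledLoss (hlam : ∀ i, 0 ≤ lam i) (η : ℝ) (j : ι) :
    c j ^ 2 * lam j * |1 - η * lam j| ^ (2 * t) / 2 ≤ unrolledLoss c lam t η := by
  have heven : Even (2 * t) := even_two_mul t
  have hnonneg : ∀ i ∈ univ, 0 ≤ c i ^ 2 * lam i * (1 - η * lam i) ^ (2 * t) := fun i _ =>
    mul_nonneg (mul_nonneg (sq_nonneg _) (hlam i)) (heven.pow_nonneg _)
  rw [heven.pow_abs, unrolledLoss]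
  linarith [single_le_sum hnonneg (mem_univ j)]

theorem abs_deriv_log_unrolledLoss_le {η L M a : ℝ} (ht : 0 < t) (hc : ∑ i, c i ^ 2 = 1)
    (hlam : ∀ i, 0 < lam i ∧ lam i ≤ L) (hM : ∀ i, |1 - η * lam i| ≤ M) (hM₀ : 0 < M)
    {j : ι} (hj : |1 - η * lam j| = M) (ha : 0 < a) (haj : a ≤ c j ^ 2 * lam j) :
    |deriv (fun x => log (unrolledLoss c lam t x)) η| ≤ 2 * t * L ^ 2 / (a * M) := by
  have hlower : a * M ^ (2 * t) / 2 ≤ unrolledLoss c lam t η := by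
    refine le_trans ?_ (term_le_unrolledLoss (fun i => (hlam i).1.le) η j)
    rw [hj]
    gcongr
  have hloss : 0 < unrolledLoss c lam t η := lt_of_lt_of_le (by positivity) hlower
  have hMpow : M ^ (2 * t) = M ^ (2 * t - 1) * M := by
    rw [← pow_succ, Nat.sub_add_cancel (by omega)]
  rw [((hasDerivAt_unrolledLoss c lam t η).log hloss.ne').deriv, abs_div, abs_of_pos hloss]
  calc |unrolledLossDeriv c lam t η| / unrolledLoss c lam t η
      ≤ t * L ^ 2 * M ^ (2 * t - 1) / (a * M ^ (2 * t) / 2) := by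
        gcongr
        exact abs_unrolledLossDeriv_le hc (fun i => (abs_of_pos (hlam i).1).trans_le (hlam i).2) hM
    _ = 2 * t * L ^ 2 / (a * M) := by
        rw [hMpow]
        field_simp

end UnrolledLoss

theorem sub_le_two_mul_max_abs_one_sub_mul {α L : ℝ} (hα : 0 ≤ α) (hαL : α ≤ L) (η : ℝ) :
    L - α ≤ 2 * L * max |1 - η * L| |1 - η * α| := by
  set M := max |1 - η * L| |1 - η * α|
  have hα' : 1 - η * α ≤ M := (le_abs_self _).trans (le_max_right _ _)
  have hL : η * L - 1 ≤ M := (neg_le_abs _).trans_eq' (by ring) |>.trans (le_max_left _ _)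
  have hM : 0 ≤ M := (abs_nonneg _).trans (le_max_left _ _)
  calc L - α = α * (η * L - 1) + L * (1 - η * α) := by ring
    _ ≤ α * M + L * M := by gcongr; linarith
    _ ≤ 2 * L * M := by nlinarith

/-- For the log-transformed meta objective `F̂(η) = (1/t) log f(w_{t,η})`,
the meta-gradient is polynomially bounded:  `|F̂'(η)| ≤ 4L³ / (c_min² α (L − α))` for every
`η ≥ 0`, uniformly in the unroll length `t`. -/
theorem stmt3 (d t : ℕ) (hd : 2 ≤ d) (ht : 1 ≤ t)
    (lam c : Fin d → ℝ)
    (hpos : ∀ i, 0 < lam i)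
    (hdec : ∀ i j : Fin d, i ≤ j → lam j ≤ lam i)
    (L α : ℝ)
    (hLdef : L = lam ⟨0, by omega⟩)
    (hadef : α = lam ⟨d - 1, by omega⟩)
    (hgap : α < L)
    (hcnorm : ∑ i, c i ^ 2 = 1)
    (cmin : ℝ)
    (hcmindef : cmin = min |c ⟨0, by omega⟩| |c ⟨d - 1, by omega⟩|)
    (hcmin : 0 < cmin)
    (F : ℝ → ℝ)
    (hF : ∀ η : ℝ,
      F η = (1 / (t : ℝ)) *
        Real.log ((1 / 2) * ∑ i, c i ^ 2 * lam i * (1 - η * lam i) ^ (2 * t))) :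
    ∀ η : ℝ, 0 ≤ η → |deriv F η| ≤ 4 * L ^ 3 / (cmin ^ 2 * α * (L - α)) := by
  intro η hη
  set i₀ : Fin d := ⟨0, by omega⟩
  set i₁ : Fin d := ⟨d - 1, by omega⟩
  have hbound : ∀ i, α ≤ lam i ∧ lam i ≤ L := fun i =>
    ⟨hadef ▸ hdec i i₁ (Fin.le_iff_val_le_val.2 (Nat.le_sub_one_of_lt i.isLt)),
      hLdef ▸ hdec i₀ i (Fin.le_iff_val_le_val.2 (Nat.zero_le _))⟩
  have hα : 0 < α := hadef ▸ hpos i₁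
  have hL : 0 < L := hα.trans hgap
  set M := max |1 - η * L| |1 - η * α|
  have hM : ∀ i, |1 - η * lam i| ≤ M := fun i =>
    abs_le_max_abs_abs (by nlinarith [hbound i]) (by nlinarith [hbound i])
  have hgapM : L - α ≤ 2 * L * M := sub_le_two_mul_max_abs_one_sub_mul hα.le hgap.le η
  have hMpos : 0 < M := by nlinarith
  obtain ⟨j, hjM, hcj, hαj⟩ : ∃ j, |1 - η * lam j| = M ∧ cmin ≤ |c j| ∧ α ≤ lam j := by
    rcases max_choice |1 - η * L| |1 - η * α| with h | h
    · exact ⟨i₀, by rw [← hLdef]; exact h.symm, hcmindef ▸ min_le_left _ _, (hbound i₀).1⟩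
    · exact ⟨i₁, by rw [← hadef]; exact h.symm, hcmindef ▸ min_le_right _ _, hadef.le⟩
  have hlog := abs_deriv_log_unrolledLoss_le (t := t) (a := cmin ^ 2 * α) (by omega)
    hcnorm (fun i => ⟨hpos i, (hbound i).2⟩) hM hMpos hjM (by positivity)
    (by rw [← sq_abs (c j)]; gcongr)
  have ht' : (0 : ℝ) < t := by exact_mod_cast ht
  rw [show F = fun x => 1 / t * log (unrolledLoss c lam t x) from funext hF,
    deriv_const_mul_field', abs_mul, abs_of_pos (by positivity : (0 : ℝ) < 1 / t)]
  calc 1 / t * |deriv (fun x => log (unrolledLoss c lam t x)) η|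
      ≤ 1 / t * (2 * t * L ^ 2 / (cmin ^ 2 * α * M)) := by gcongr
    _ = 4 * L ^ 3 / (cmin ^ 2 * α * (2 * L * M)) := by
        field_simp
        ring
    _ ≤ 4 * L ^ 3 / (cmin ^ 2 * α * (L - α)) := by gcongr
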